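/- For |q|<1 and w with |w|>|q|, w ∉ {q^{−ℓ} : ℓ ∈ ℕ} ∪ {q^ℓ : ℓ ∈ ℤ}, the universal mock theta function g₃(w;q) := ∑_{n≥0} q^{n(n+1)}/((w;q)_{n+1}(w^{-1}q;q)_{n+1}) equals g_{3,3}(w;q) := ∑_{n≥0} w^{-n} q^n/(w;q)_{n+1}. -/

import Mathlib

noncomputable def qPoch (a q : ℂ) (n : ℕ) : ℂ :=
  ∏ j ∈ Finset.range n, (1 - a * q ^ j)

open Filter Finset

namespace G3Aux

noncomputable def gS (b t q : ℂ) (n : ℕ) : ℂ := t ^ n / qPoch (b * q) q n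

noncomputable def fT (b t q : ℂ) (n : ℕ) : ℂ :=
  (b * t) ^ n * q ^ (n ^ 2) / (qPoch (b * q) q n * qPoch (t * q) q n)

lemma qPoch_succ (a q : ℂ) (n : ℕ) :
    qPoch a q (n + 1) = (1 - a) * qPoch (a * q) q n := by
  unfold qPoch
  rw [Finset.prod_range_succ']
  simp only [pow_zero, mul_one, pow_succ]
  rw [mul_comm]
  congr 1
  apply Finset.prod_congr rfl
  intro j _
  ring

lemma qPoch_add (c q : ℂ) (n m : ℕ) :
    qPoch c q (n + m) = qPoch c q n * qPoch (c * q ^ n) q m := by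
  unfold qPoch
  rw [Finset.prod_range_add]
  congr 1
  apply Finset.prod_congr rfl
  intro j _
  rw [mul_assoc, ← pow_add]

lemma qPoch_ne_zero {c q : ℂ} (h : ∀ j : ℕ, c * q ^ j ≠ 1) (n : ℕ) : qPoch c q n ≠ 0 := by
  unfold qPoch
  apply Finset.prod_ne_zero_iff.2
  intro j _
  exact sub_ne_zero.2 fun hh => (h j) hh.symm

lemma norm_prod_one_sub_ge (z : ℕ → ℂ) (m : ℕ) :
    1 - ∑ j ∈ range m, ‖z j‖ ≤ ‖∏ j ∈ range m, (1 - z j)‖ := by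
  induction m with
  | zero => simp
  | succ m ih =>
    rw [Finset.prod_range_succ, Finset.sum_range_succ, norm_mul]
    have hs : (0:ℝ) ≤ ∑ j ∈ range m, ‖z j‖ :=
      Finset.sum_nonneg (fun j _ => norm_nonneg (z j))
    rcases le_or_gt (1 - ∑ j ∈ range m, ‖z j‖) 0 with h | h
    · have : 1 - (∑ j ∈ range m, ‖z j‖ + ‖z m‖) ≤ 0 := by
        have := norm_nonneg (z m); linarith
      exact this.trans (by positivity)
    · have h1 : 1 - ‖z m‖ ≤ ‖1 - z m‖ := by
        calc 1 - ‖z m‖ = ‖(1:ℂ)‖ - ‖z m‖ := by simp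
        _ ≤ ‖1 - z m‖ := norm_sub_norm_le _ _
      rcases le_or_gt (1 - ‖z m‖) 0 with h2 | h2
      · have : 1 - (∑ j ∈ range m, ‖z j‖ + ‖z m‖) ≤ 0 := by linarith
        exact this.trans (by positivity)
      · calc 1 - (∑ j ∈ range m, ‖z j‖ + ‖z m‖)
            ≤ (1 - ∑ j ∈ range m, ‖z j‖) * (1 - ‖z m‖) := by nlinarith [norm_nonneg (z m)]
          _ ≤ ‖∏ j ∈ range m, (1 - z j)‖ * ‖1 - z m‖ :=
              mul_le_mul ih h1 h2.le (norm_nonneg _)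

lemma qPoch_norm_ge_half {c q : ℂ} (hq : ‖q‖ < 1) (hc : ‖c‖ ≤ (1 - ‖q‖)/2) (n : ℕ) :
    (1:ℝ)/2 ≤ ‖qPoch c q n‖ := by
  have hq0 : (0:ℝ) ≤ ‖q‖ := norm_nonneg _
  have hsum : ∑ j ∈ range n, ‖c * q ^ j‖ ≤ ‖c‖ / (1 - ‖q‖) := by
    have : ∑ j ∈ range n, ‖c * q ^ j‖ = ‖c‖ * ∑ j ∈ range n, ‖q‖ ^ j := by
      rw [Finset.mul_sum]; apply Finset.sum_congr rfl; intro j _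
      rw [norm_mul, norm_pow]
    rw [this]
    have hgeom : ∑ j ∈ range n, ‖q‖ ^ j ≤ (1 - ‖q‖)⁻¹ := by
      have h1 := Summable.sum_le_tsum (range n) (fun j _ => by positivity)
        (summable_geometric_of_lt_one hq0 hq)
      rwa [tsum_geometric_of_lt_one hq0 hq] at h1
    calc ‖c‖ * ∑ j ∈ range n, ‖q‖ ^ j ≤ ‖c‖ * (1 - ‖q‖)⁻¹ :=
          mul_le_mul_of_nonneg_left hgeom (norm_nonneg _)
      _ = ‖c‖ / (1 - ‖q‖) := by rw [div_eq_mul_inv]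
  have h2 : ‖c‖ / (1 - ‖q‖) ≤ 1/2 := by
    rw [div_le_div_iff₀ (by linarith) (by norm_num)]
    linarith
  have := norm_prod_one_sub_ge (fun j => c * q ^ j) n
  unfold qPoch
  linarith


lemma qPoch_lb {c q : ℂ} (hq : ‖q‖ < 1) (h : ∀ j : ℕ, c * q ^ j ≠ 1) :
    ∃ δ : ℝ, 0 < δ ∧ ∀ n, δ ≤ ‖qPoch c q n‖ := by
  -- choose K with ‖c‖ * ‖q‖ ^ K ≤ (1 - ‖q‖)/2
  obtain ⟨K, hK⟩ : ∃ K, ‖c‖ * ‖q‖ ^ K ≤ (1 - ‖q‖)/2 := by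
    have h0 : Tendsto (fun K : ℕ => ‖c‖ * ‖q‖ ^ K) atTop (nhds 0) := by
      simpa using (tendsto_pow_atTop_nhds_zero_of_lt_one (norm_nonneg q) hq).const_mul ‖c‖
    have := (h0.eventually_le_const (show (0:ℝ) < (1 - ‖q‖)/2 by linarith)).exists
    obtain ⟨K, hK⟩ := this
    exact ⟨K, hK⟩
  set δ₀ : ℝ := (Finset.range (K+1)).inf' (by simp) (fun n => ‖qPoch c q n‖) with hδ₀
  have hδ₀pos : 0 < δ₀ := by
    rw [hδ₀]
    apply Finset.lt_inf'_iff (α := ℝ) _ |>.2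
    intro n _
    exact norm_pos_iff.2 (qPoch_ne_zero h n)
  refine ⟨δ₀ / 2, by positivity, fun n => ?_⟩
  have hmem : ∀ m, m ∈ Finset.range (K+1) → δ₀ ≤ ‖qPoch c q m‖ := by
    intro m hm; exact Finset.inf'_le _ hm
  rcases le_or_gt n K with hn | hn
  · have := hmem n (by simp; omega)
    linarith
  · -- n = K + (n - K)
    obtain ⟨m, rfl⟩ : ∃ m, n = K + m := ⟨n - K, by omega⟩
    rw [qPoch_add, norm_mul]
    have h1 : δ₀ ≤ ‖qPoch c q K‖ := hmem K (by simp)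
    have h2 : (1:ℝ)/2 ≤ ‖qPoch (c * q ^ K) q m‖ := by
      apply qPoch_norm_ge_half hq
      rw [norm_mul, norm_pow]; exact hK
    calc δ₀ / 2 = δ₀ * (1/2) := by ring
      _ ≤ ‖qPoch c q K‖ * ‖qPoch (c * q ^ K) q m‖ :=
        mul_le_mul h1 h2 (by norm_num) (norm_nonneg _)

lemma summable_geom_aux {a r : ℝ} (hr0 : 0 ≤ r) (hr : r < 1) (ha : 0 ≤ a) (C : ℝ) :
    Summable (fun n : ℕ => C * (a ^ n * r ^ (n ^ 2))) := by
  apply Summable.mul_left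
  have base : Tendsto (fun k : ℕ => (r ^ 2) ^ k) atTop (nhds 0) :=
    tendsto_pow_atTop_nhds_zero_of_lt_one (by positivity) (by nlinarith)
  have hrat : Tendsto (fun n : ℕ => a * (r * (r ^ 2) ^ n)) atTop (nhds 0) := by
    simpa [mul_assoc] using base.const_mul (a * r)
  apply summable_of_ratio_norm_eventually_le (r := 1/2) (by norm_num)
  filter_upwards [hrat.eventually_le_const (show (0:ℝ) < 1/2 by norm_num)] with n hn
  have key : a ^ (n+1) * r ^ ((n+1) ^ 2) = (a ^ n * r ^ (n ^ 2)) * (a * (r * (r ^ 2) ^ n)) := by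
    rw [show (n+1)^2 = n^2 + 2*n + 1 by ring]
    rw [show r ^ (n^2 + 2*n + 1) = r ^ (n^2) * (r^2)^n * r by
      rw [← pow_mul, ← pow_add, ← pow_succ]]
    ring
  rw [Real.norm_eq_abs, Real.norm_eq_abs, abs_of_nonneg (by positivity),
    abs_of_nonneg (by positivity), key]
  calc (a ^ n * r ^ n ^ 2) * (a * (r * (r ^ 2) ^ n)) ≤ (a ^ n * r ^ n ^ 2) * (1/2) := by
        apply mul_le_mul_of_nonneg_left hn (by positivity)
    _ = 1/2 * (a ^ n * r ^ n ^ 2) := by ring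


-- shift conditions
lemma cond_shift {b q : ℂ} (hb : ∀ k : ℕ, b * q ^ (k+1) ≠ 1) :
    ∀ j : ℕ, (b * q) * q ^ j ≠ 1 := by
  intro j
  have := hb j
  rw [mul_assoc, ← pow_succ']
  exact this

lemma summable_norm_gS {b t q : ℂ} (hq : ‖q‖ < 1) (ht1 : ‖t‖ < 1)
    (hb : ∀ k : ℕ, b * q ^ (k+1) ≠ 1) :
    Summable (fun n => ‖gS b t q n‖) := by
  obtain ⟨δ, hδ, hlb⟩ := qPoch_lb hq (cond_shift hb)
  have hbound : ∀ n, ‖gS b t q n‖ ≤ δ⁻¹ * ‖t‖ ^ n := by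
    intro n
    unfold gS
    rw [norm_div, norm_pow]
    rw [div_le_iff₀ (lt_of_lt_of_le hδ (hlb n))]
    calc ‖t‖ ^ n = δ⁻¹ * ‖t‖ ^ n * δ := by field_simp
      _ ≤ δ⁻¹ * ‖t‖ ^ n * ‖qPoch (b * q) q n‖ := by
          apply mul_le_mul_of_nonneg_left (hlb n) (by positivity)
  exact Summable.of_nonneg_of_le (fun n => norm_nonneg _) hbound
    ((summable_geometric_of_lt_one (norm_nonneg t) ht1).mul_left _)

lemma summable_norm_fT {b t q : ℂ} (hq : ‖q‖ < 1)
    (hb : ∀ k : ℕ, b * q ^ (k+1) ≠ 1) (ht : ∀ k : ℕ, t * q ^ (k+1) ≠ 1) :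
    Summable (fun n => ‖fT b t q n‖) := by
  obtain ⟨δ₁, hδ₁, hlb₁⟩ := qPoch_lb hq (cond_shift hb)
  obtain ⟨δ₂, hδ₂, hlb₂⟩ := qPoch_lb hq (cond_shift ht)
  have hbound : ∀ n, ‖fT b t q n‖ ≤ (δ₁*δ₂)⁻¹ * (‖b*t‖ ^ n * ‖q‖ ^ (n^2)) := by
    intro n
    unfold fT
    rw [norm_div, norm_mul ((b*t)^n) (q^(n^2)),
      norm_mul (qPoch (b * q) q n) (qPoch (t * q) q n), norm_pow (b*t), norm_pow q]
    have hd : 0 < ‖qPoch (b * q) q n‖ * ‖qPoch (t * q) q n‖ := by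
      have := lt_of_lt_of_le hδ₁ (hlb₁ n); have := lt_of_lt_of_le hδ₂ (hlb₂ n); positivity
    rw [div_le_iff₀ hd]
    calc ‖b*t‖ ^ n * ‖q‖ ^ (n^2)
        = (δ₁*δ₂)⁻¹ * (‖b*t‖ ^ n * ‖q‖ ^ (n^2)) * (δ₁*δ₂) := by field_simp
      _ ≤ (δ₁*δ₂)⁻¹ * (‖b*t‖ ^ n * ‖q‖ ^ (n^2)) *
            (‖qPoch (b * q) q n‖ * ‖qPoch (t * q) q n‖) := by
          apply mul_le_mul_of_nonneg_left _ (by positivity)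
          exact mul_le_mul (hlb₁ n) (hlb₂ n) hδ₂.le (norm_nonneg _)
  exact Summable.of_nonneg_of_le (fun n => norm_nonneg _) hbound
    (summable_geom_aux (norm_nonneg q) hq (norm_nonneg _) _)

lemma fT_succ {b t q : ℂ} (hb0 : (1:ℂ) - b*q ≠ 0) (ht0 : (1:ℂ) - t*q ≠ 0)
    (hp1 : ∀ n, qPoch (b*q*q) q n ≠ 0) (hp2 : ∀ n, qPoch (t*q*q) q n ≠ 0) (n : ℕ) :
    fT b t q (n+1) = (b*t*q / ((1-b*q)*(1-t*q))) * fT (b*q) (t*q) q n := by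
  unfold fT
  rw [qPoch_succ (b*q) q n, qPoch_succ (t*q) q n]
  rw [show (n+1)^2 = n^2 + 2*n + 1 by ring]
  rw [show q ^ (n^2 + 2*n + 1) = q ^ (n^2) * (q^2)^n * q by
    rw [← pow_mul, ← pow_add, ← pow_succ]]
  rw [show (b*q*(t*q)) = (b*t)*q^2 by ring, mul_pow]
  field_simp [hp1 n, hp2 n]
  ring

lemma qPoch_succ_right (c q : ℂ) (m : ℕ) :
    qPoch c q (m+1) = qPoch c q m * (1 - c * q ^ m) := Finset.prod_range_succ _ _

lemma gS_step {b t q : ℂ} (hb : ∀ k : ℕ, b * q ^ (k+1) ≠ 1) (ht0 : (1:ℂ) - t*q ≠ 0) (m : ℕ) :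
    gS b t q (m+1) - t * gS b t q m
      = (b*t*q / ((1-b*q)*(1-t*q))) * ((1 - t*q) * gS (b*q) (t*q) q m) := by
  have hb0 : (1:ℂ) - b*q ≠ 0 := by
    have := hb 0; rw [pow_one] at this
    exact sub_ne_zero.2 fun h => this h.symm
  have hb' : ∀ k : ℕ, (b*q) * q ^ (k+1) ≠ 1 := fun k => cond_shift hb (k+1)
  have hQ : qPoch (b*q*q) q m ≠ 0 := qPoch_ne_zero (cond_shift hb') m
  have hfac : (1:ℂ) - (b*q) * q ^ m ≠ 0 :=
    sub_ne_zero.2 fun h => cond_shift hb m h.symm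
  have hrel : qPoch (b*q) q m * (1 - (b*q) * q ^ m) = (1 - b*q) * qPoch (b*q*q) q m := by
    rw [← qPoch_succ_right, qPoch_succ]
  have hP : qPoch (b*q) q m = (1 - b*q) * qPoch (b*q*q) q m / (1 - (b*q) * q ^ m) := by
    field_simp
    rw [show b*q*q = b*q^2 by ring] at hrel
    linear_combination hrel
  unfold gS
  rw [qPoch_succ (b*q) q m, hP]
  rw [show ((t*q):ℂ)^m = t^m * q^m by rw [mul_pow], pow_succ]
  field_simp
  ring


lemma one_sub_ne {b q : ℂ} (hb : ∀ k : ℕ, b * q ^ (k+1) ≠ 1) : (1:ℂ) - b*q ≠ 0 := by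
  have := hb 0; rw [pow_one] at this
  exact sub_ne_zero.2 fun h => this h.symm

lemma cond_shift' {b q : ℂ} (hb : ∀ k : ℕ, b * q ^ (k+1) ≠ 1) :
    ∀ k : ℕ, (b*q) * q ^ (k+1) ≠ 1 := fun k => cond_shift hb (k+1)

lemma fT_zero (b t q : ℂ) : fT b t q 0 = 1 := by
  unfold fT qPoch; simp

lemma gS_zero (b t q : ℂ) : gS b t q 0 = 1 := by
  unfold gS qPoch; simp

lemma recG {b t q : ℂ} (hq : ‖q‖ < 1)
    (hb : ∀ k : ℕ, b * q ^ (k+1) ≠ 1) (ht : ∀ k : ℕ, t * q ^ (k+1) ≠ 1) :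
    ∑' n, fT b t q n
      = 1 + (b*t*q / ((1-b*q)*(1-t*q))) * ∑' n, fT (b*q) (t*q) q n := by
  have hsum : Summable (fT b t q) := (summable_norm_fT hq hb ht).of_norm
  rw [Summable.tsum_eq_zero_add hsum, fT_zero]
  congr 1
  rw [← tsum_mul_left]
  apply tsum_congr
  intro n
  exact fT_succ (one_sub_ne hb) (one_sub_ne ht)
    (fun n => qPoch_ne_zero (cond_shift (cond_shift' hb)) n)
    (fun n => qPoch_ne_zero (cond_shift (cond_shift' ht)) n) n

lemma recS {b t q : ℂ} (hq : ‖q‖ < 1) (ht1 : ‖t‖ < 1)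
    (hb : ∀ k : ℕ, b * q ^ (k+1) ≠ 1) (ht : ∀ k : ℕ, t * q ^ (k+1) ≠ 1) :
    (1 - t) * ∑' n, gS b t q n
      = 1 + (b*t*q / ((1-b*q)*(1-t*q))) * ((1 - t*q) * ∑' n, gS (b*q) (t*q) q n) := by
  have hsum : Summable (gS b t q) := (summable_norm_gS hq ht1 hb).of_norm
  have hsum' : Summable (fun n => gS b t q (n+1)) := by
    rw [← summable_nat_add_iff 1] at hsum
    exact hsum
  have h1 : (1 - t) * ∑' n, gS b t q n
      = (1 + ∑' n, gS b t q (n+1)) - ∑' n, t * gS b t q n := by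
    rw [tsum_mul_left, sub_mul, one_mul]
    rw [Summable.tsum_eq_zero_add hsum, gS_zero]
  rw [h1]
  have h2 : (1 + ∑' n, gS b t q (n+1)) - ∑' n, t * gS b t q n
      = 1 + ∑' n, (gS b t q (n+1) - t * gS b t q n) := by
    rw [Summable.tsum_sub hsum' (hsum.mul_left t)]
    ring
  rw [h2]
  congr 1
  rw [← tsum_mul_left (a := (1 - t*q)), ← tsum_mul_left]
  apply tsum_congr
  intro n
  exact gS_step hb (one_sub_ne ht) n


set_option maxHeartbeats 2000000 in
lemma key {b t q : ℂ} (hq : ‖q‖ < 1) (ht1 : ‖t‖ < 1)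
    (hb : ∀ k : ℕ, b * q ^ (k+1) ≠ 1) (ht : ∀ k : ℕ, t * q ^ (k+1) ≠ 1) :
    ∑' n, fT b t q n = (1 - t) * ∑' n, gS b t q n := by
  set B : ℕ → ℂ := fun M => b * q ^ M with hB
  set T : ℕ → ℂ := fun M => t * q ^ M with hT
  have hBs : ∀ M, B M * q = B (M+1) := by
    intro M; simp only [hB, pow_succ]; ring
  have hTs : ∀ M, T M * q = T (M+1) := by
    intro M; simp only [hT, pow_succ]; ring
  have hbM : ∀ M k : ℕ, B M * q ^ (k+1) ≠ 1 := by
    intro M k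
    show b * q ^ M * q ^ (k+1) ≠ 1
    rw [mul_assoc, ← pow_add, show M + (k+1) = (M+k)+1 from by omega]
    exact hb (M+k)
  have htM : ∀ M k : ℕ, T M * q ^ (k+1) ≠ 1 := by
    intro M k
    show t * q ^ M * q ^ (k+1) ≠ 1
    rw [mul_assoc, ← pow_add, show M + (k+1) = (M+k)+1 from by omega]
    exact ht (M+k)
  have hqM : ∀ M : ℕ, ‖q‖ ^ M ≤ 1 := fun M => pow_le_one₀ (norm_nonneg q) hq.le
  have ht1M : ∀ M, ‖T M‖ < 1 := by
    intro M
    show ‖t * q ^ M‖ < 1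
    rw [norm_mul, norm_pow]
    calc ‖t‖ * ‖q‖ ^ M ≤ ‖t‖ * 1 := mul_le_mul_of_nonneg_left (hqM M) (norm_nonneg t)
      _ < 1 := by rw [mul_one]; exact ht1
  set r : ℕ → ℂ := fun M => (B M * T M * q) / ((1 - B M * q) * (1 - T M * q)) with hr
  set D : ℕ → ℂ := fun M =>
    (∑' n, fT (B M) (T M) q n) - (1 - T M) * ∑' n, gS (B M) (T M) q n with hD
  have recD : ∀ M, D M = r M * D (M+1) := by
    intro M
    have hg := recG (b := B M) (t := T M) hq (hbM M) (htM M)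
    have hs := recS (b := B M) (t := T M) hq (ht1M M) (hbM M) (htM M)
    rw [hBs, hTs] at hg hs
    simp only [hD, hr]
    rw [hg, hs, hTs]
    ring
  have iter : ∀ M, D 0 = (∏ j ∈ range M, r j) * D M := by
    intro M
    induction M with
    | zero => simp
    | succ M ih => rw [prod_range_succ, ih, recD M]; ring
  -- eventual bounds
  have tendsq : Tendsto (fun M : ℕ => ‖q‖ ^ M) atTop (nhds 0) :=
    tendsto_pow_atTop_nhds_zero_of_lt_one (norm_nonneg q) hq
  have ev1 : ∀ᶠ M in atTop, ‖B M * q‖ ≤ (1 - ‖q‖)/2 := by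
    have h0 : Tendsto (fun M : ℕ => ‖B M * q‖) atTop (nhds 0) := by
      have : (fun M : ℕ => ‖B M * q‖) = fun M => (‖b‖ * ‖q‖) * ‖q‖ ^ M := by
        funext M; show ‖b * q ^ M * q‖ = _
        rw [norm_mul, norm_mul, norm_pow]; ring
      rw [this]; simpa using tendsq.const_mul (‖b‖ * ‖q‖)
    exact h0.eventually_le_const (by linarith)
  have ev2 : ∀ᶠ M in atTop, ‖T M * q‖ ≤ (1 - ‖q‖)/2 := by
    have h0 : Tendsto (fun M : ℕ => ‖T M * q‖) atTop (nhds 0) := by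
      have : (fun M : ℕ => ‖T M * q‖) = fun M => (‖t‖ * ‖q‖) * ‖q‖ ^ M := by
        funext M; show ‖t * q ^ M * q‖ = _
        rw [norm_mul, norm_mul, norm_pow]; ring
      rw [this]; simpa using tendsq.const_mul (‖t‖ * ‖q‖)
    exact h0.eventually_le_const (by linarith)
  have ev3 : ∀ᶠ M in atTop, ‖B M * T M‖ ≤ 1/2 := by
    have h0 : Tendsto (fun M : ℕ => ‖B M * T M‖) atTop (nhds 0) := by
      have he : (fun M : ℕ => ‖B M * T M‖) = fun M => (‖b‖ * ‖t‖) * (‖q‖^2) ^ M := by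
        funext M; show ‖b * q ^ M * (t * q ^ M)‖ = _
        rw [norm_mul, norm_mul, norm_mul, norm_pow, ← pow_mul]
        ring
      rw [he]
      have : Tendsto (fun M : ℕ => (‖q‖^2) ^ M) atTop (nhds 0) :=
        tendsto_pow_atTop_nhds_zero_of_lt_one (by positivity) (by nlinarith [norm_nonneg q])
      simpa using this.const_mul (‖b‖ * ‖t‖)
    exact h0.eventually_le_const (by norm_num)
  have ev4 : ∀ᶠ M in atTop, ‖T M‖ ≤ 1/2 := by
    have h0 : Tendsto (fun M : ℕ => ‖T M‖) atTop (nhds 0) := by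
      have : (fun M : ℕ => ‖T M‖) = fun M => ‖t‖ * ‖q‖ ^ M := by
        funext M; show ‖t * q ^ M‖ = _; rw [norm_mul, norm_pow]
      rw [this]; simpa using tendsq.const_mul ‖t‖
    exact h0.eventually_le_const (by norm_num)
  have ev5 : ∀ᶠ M in atTop, ‖r M‖ ≤ 1/2 := by
    have h0 : Tendsto (fun M : ℕ => ‖B M * T M * q‖) atTop (nhds 0) := by
      have : (fun M : ℕ => ‖B M * T M * q‖) = fun M => ‖B M * T M‖ * ‖q‖ := by
        funext M; rw [norm_mul]
      rw [this]
      have h1 : Tendsto (fun M : ℕ => ‖B M * T M‖) atTop (nhds 0) := by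
        have he : (fun M : ℕ => ‖B M * T M‖) = fun M => (‖b‖ * ‖t‖) * (‖q‖^2) ^ M := by
          funext M; show ‖b * q ^ M * (t * q ^ M)‖ = _
          rw [norm_mul, norm_mul, norm_mul, norm_pow, ← pow_mul]
          ring
        rw [he]
        have : Tendsto (fun M : ℕ => (‖q‖^2) ^ M) atTop (nhds 0) :=
          tendsto_pow_atTop_nhds_zero_of_lt_one (by positivity) (by nlinarith [norm_nonneg q])
        simpa using this.const_mul (‖b‖ * ‖t‖)
      simpa using h1.mul_const ‖q‖
    filter_upwards [ev1, ev2, h0.eventually_le_const (show (0:ℝ) < 1/8 by norm_num)]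
      with M h1 h2 h3
    have hq0 : (0:ℝ) ≤ ‖q‖ := norm_nonneg q
    have hd1 : (1:ℝ)/2 ≤ ‖1 - B M * q‖ := by
      have := norm_sub_norm_le (1 : ℂ) (B M * q)
      rw [norm_one] at this
      have : 1 - ‖B M * q‖ ≤ ‖1 - B M * q‖ := this
      linarith
    have hd2 : (1:ℝ)/2 ≤ ‖1 - T M * q‖ := by
      have := norm_sub_norm_le (1 : ℂ) (T M * q)
      rw [norm_one] at this
      linarith
    show ‖(B M * T M * q) / ((1 - B M * q) * (1 - T M * q))‖ ≤ 1/2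
    rw [norm_div, norm_mul (1 - B M * q)]
    rw [div_le_iff₀ (by nlinarith)]
    nlinarith
  have evD : ∀ᶠ M in atTop, ‖D M‖ ≤ 16 := by
    filter_upwards [ev1, ev2, ev3, ev4] with M h1 h2 h3 h4
    have hp1 : ∀ n, (1:ℝ)/2 ≤ ‖qPoch (B M * q) q n‖ := fun n => qPoch_norm_ge_half hq h1 n
    have hp2 : ∀ n, (1:ℝ)/2 ≤ ‖qPoch (T M * q) q n‖ := fun n => qPoch_norm_ge_half hq h2 n
    have hfb : ∀ n, ‖fT (B M) (T M) q n‖ ≤ 4 * (1/2)^n := by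
      intro n
      unfold fT
      rw [norm_div, norm_mul ((B M * T M)^n), norm_mul (qPoch (B M * q) q n), norm_pow]
      have hd : (0:ℝ) < ‖qPoch (B M * q) q n‖ * ‖qPoch (T M * q) q n‖ := by
        have := hp1 n; have := hp2 n; nlinarith
      rw [div_le_iff₀ hd]
      have hx : ‖B M * T M‖ ^ n ≤ (1/2)^n := pow_le_pow_left₀ (norm_nonneg _) h3 n
      have hy : ‖q ^ (n^2)‖ ≤ 1 := by
        rw [norm_pow]; exact pow_le_one₀ (norm_nonneg q) hq.le
      have hxy : ‖B M * T M‖ ^ n * ‖q ^ (n^2)‖ ≤ (1/2)^n := by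
        calc ‖B M * T M‖ ^ n * ‖q ^ (n^2)‖ ≤ (1/2)^n * ‖q ^ (n^2)‖ :=
              mul_le_mul_of_nonneg_right hx (norm_nonneg _)
          _ ≤ (1/2)^n * 1 := mul_le_mul_of_nonneg_left hy (by positivity)
          _ = (1/2)^n := mul_one _
      have h14 : (1:ℝ)/4 ≤ ‖qPoch (B M * q) q n‖ * ‖qPoch (T M * q) q n‖ := by
        have := hp1 n; have := hp2 n; nlinarith
      calc ‖B M * T M‖ ^ n * ‖q ^ (n^2)‖ ≤ (1/2)^n := hxy
        _ = (4 * (1/2)^n) * (1/4) := by ring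
        _ ≤ (4 * (1/2)^n) * (‖qPoch (B M * q) q n‖ * ‖qPoch (T M * q) q n‖) :=
            mul_le_mul_of_nonneg_left h14 (by positivity)
    have hgb : ∀ n, ‖gS (B M) (T M) q n‖ ≤ 2 * (1/2)^n := by
      intro n
      unfold gS
      rw [norm_div, norm_pow]
      rw [div_le_iff₀ (lt_of_lt_of_le (by norm_num) (hp1 n))]
      calc ‖T M‖ ^ n ≤ (1/2)^n := pow_le_pow_left₀ (norm_nonneg _) h4 n
        _ = (2 * (1/2)^n) * (1/2) := by ring
        _ ≤ (2 * (1/2)^n) * ‖qPoch (B M * q) q n‖ :=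
            mul_le_mul_of_nonneg_left (hp1 n) (by positivity)
    have sgeo : Summable (fun n : ℕ => ((1:ℝ)/2)^n) :=
      summable_geometric_of_lt_one (by norm_num) (by norm_num)
    have hGG : ‖∑' n, fT (B M) (T M) q n‖ ≤ 8 := by
      have hsn := summable_norm_fT hq (hbM M) (htM M)
      calc ‖∑' n, fT (B M) (T M) q n‖ ≤ ∑' n, ‖fT (B M) (T M) q n‖ :=
            norm_tsum_le_tsum_norm hsn
        _ ≤ ∑' n : ℕ, 4 * (1/2)^n := Summable.tsum_le_tsum hfb hsn (sgeo.mul_left 4)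
        _ = 4 * ∑' n : ℕ, ((1:ℝ)/2)^n := tsum_mul_left
        _ = 8 := by rw [tsum_geometric_of_lt_one (by norm_num) (by norm_num)]; norm_num
    have hSS : ‖∑' n, gS (B M) (T M) q n‖ ≤ 4 := by
      have hsn := summable_norm_gS hq (ht1M M) (hbM M)
      calc ‖∑' n, gS (B M) (T M) q n‖ ≤ ∑' n, ‖gS (B M) (T M) q n‖ :=
            norm_tsum_le_tsum_norm hsn
        _ ≤ ∑' n : ℕ, 2 * (1/2)^n := Summable.tsum_le_tsum hgb hsn (sgeo.mul_left 2)
        _ = 2 * ∑' n : ℕ, ((1:ℝ)/2)^n := tsum_mul_left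
        _ = 4 := by rw [tsum_geometric_of_lt_one (by norm_num) (by norm_num)]; norm_num
    have h1T : ‖(1:ℂ) - T M‖ ≤ 3/2 := by
      calc ‖(1:ℂ) - T M‖ ≤ ‖(1:ℂ)‖ + ‖T M‖ := norm_sub_le _ _
        _ ≤ 1 + 1/2 := by rw [norm_one]; linarith
        _ = 3/2 := by norm_num
    have hDM : D M = (∑' n, fT (B M) (T M) q n) - (1 - T M) * ∑' n, gS (B M) (T M) q n := rfl
    rw [hDM]
    calc ‖(∑' n, fT (B M) (T M) q n) - (1 - T M) * ∑' n, gS (B M) (T M) q n‖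
        ≤ ‖∑' n, fT (B M) (T M) q n‖ + ‖(1 - T M) * ∑' n, gS (B M) (T M) q n‖ :=
          norm_sub_le _ _
      _ ≤ 8 + (3/2) * 4 := by
          rw [norm_mul]
          have hnn2 := norm_nonneg (∑' n, gS (B M) (T M) q n)
          have := mul_le_mul h1T hSS hnn2 (by norm_num : (0:ℝ) ≤ 3/2)
          linarith
      _ ≤ 16 := by norm_num
  -- combine
  obtain ⟨M₀, hM₀⟩ := (ev5.and evD).exists_forall_of_atTop
  set C : ℝ := ∏ j ∈ range M₀, ‖r j‖ with hC
  have hCnn : 0 ≤ C := Finset.prod_nonneg (fun j _ => norm_nonneg _)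
  have hbnd : ∀ M : ℕ, ‖D 0‖ ≤ (C * 16) * (1/2)^M := by
    intro M
    have h0 := iter (M₀ + M)
    have : ‖D 0‖ = (∏ j ∈ range (M₀ + M), ‖r j‖) * ‖D (M₀ + M)‖ := by
      rw [h0, norm_mul, norm_prod]
    rw [this, Finset.prod_range_add]
    have hDb : ‖D (M₀ + M)‖ ≤ 16 := (hM₀ (M₀ + M) (by omega)).2
    have hprod : ∏ i ∈ range M, ‖r (M₀ + i)‖ ≤ (1/2)^M := by
      calc ∏ i ∈ range M, ‖r (M₀ + i)‖ ≤ ∏ i ∈ range M, ((1:ℝ)/2) := by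
            apply Finset.prod_le_prod (fun i _ => norm_nonneg _)
            intro i _
            exact (hM₀ (M₀ + i) (by omega)).1
        _ = (1/2)^M := by rw [Finset.prod_const, card_range]
    calc C * (∏ i ∈ range M, ‖r (M₀ + i)‖) * ‖D (M₀ + M)‖
        ≤ C * (1/2)^M * 16 := by
          apply mul_le_mul (mul_le_mul_of_nonneg_left hprod hCnn) hDb (norm_nonneg _)
          positivity
      _ = (C * 16) * (1/2)^M := by ring
  have hlim : Tendsto (fun M : ℕ => (C * 16) * (1/2 : ℝ)^M) atTop (nhds 0) := by
    simpa using (tendsto_pow_atTop_nhds_zero_of_lt_one (by norm_num : (0:ℝ) ≤ 1/2)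
      (by norm_num)).const_mul (C * 16)
  have hD0 : ‖D 0‖ ≤ 0 := ge_of_tendsto hlim (Filter.Eventually.of_forall hbnd)
  have hD0' : D 0 = 0 := by
    have := norm_nonneg (D 0)
    have : ‖D 0‖ = 0 := le_antisymm hD0 this
    exact norm_eq_zero.1 this
  have : (∑' n, fT (B 0) (T 0) q n) = (1 - T 0) * ∑' n, gS (B 0) (T 0) q n :=
    sub_eq_zero.1 hD0'
  simpa only [hB, hT, pow_zero, mul_one] using this


end G3Aux

open G3Aux in
set_option maxHeartbeats 1000000 in
theorem g3_eq_g33 (w q : ℂ) (hq : ‖q‖ < 1) (hwq : ‖q‖ < ‖w‖)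
    (hw' : ∀ ℓ : ℤ, w ≠ q ^ ℓ) :
    ∑' n : ℕ, q ^ (n * (n + 1)) / (qPoch w q (n + 1) * qPoch (w⁻¹ * q) q (n + 1))
      = ∑' n : ℕ, (w ^ n)⁻¹ * q ^ n / qPoch w q (n + 1) := by
  have hw0 : w ≠ 0 := by
    intro h
    rw [h, norm_zero] at hwq
    exact absurd hwq (not_lt.2 (norm_nonneg q))
  have hbW : ∀ k : ℕ, w * q ^ (k+1) ≠ 1 := by
    intro k h
    apply hw' (-((k:ℤ)+1))
    have he : q ^ (-((k:ℤ)+1)) = (q ^ (k+1 : ℕ))⁻¹ := by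
      rw [zpow_neg]; norm_cast
    rw [he]
    exact eq_inv_of_mul_eq_one_left h
  have htW : ∀ k : ℕ, (q/w) * q ^ (k+1) ≠ 1 := by
    intro k h
    rw [div_mul_eq_mul_div, div_eq_one_iff_eq hw0] at h
    apply hw' ((k+2 : ℕ) : ℤ)
    rw [zpow_natCast, show k+2 = (k+1)+1 from rfl, pow_succ']
    exact h.symm
  have hw1 : (1:ℂ) - w ≠ 0 := by
    apply sub_ne_zero.2
    intro h
    exact hw' 0 (by rw [zpow_zero]; exact h.symm)
  have htw0 : (1:ℂ) - q/w ≠ 0 := by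
    apply sub_ne_zero.2
    intro h
    apply hw' 1
    rw [zpow_one]
    field_simp at h
    exact h
  have ht1 : ‖q/w‖ < 1 := by
    rw [norm_div]
    exact (div_lt_one (lt_of_le_of_lt (norm_nonneg q) hwq)).2 hwq
  have hL : ∀ n : ℕ, q ^ (n * (n + 1)) / (qPoch w q (n + 1) * qPoch (w⁻¹ * q) q (n + 1))
      = (1/((1-w)*(1-q/w))) * fT w (q/w) q n := by
    intro n
    have hinv : w⁻¹ * q = q / w := by rw [div_eq_mul_inv]; ring
    rw [hinv, qPoch_succ w, qPoch_succ (q/w)]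
    unfold fT
    rw [show w * (q/w) = q from by field_simp]
    rw [show n*(n+1) = n^2 + n from by ring, pow_add]
    have h1 : qPoch (w*q) q n ≠ 0 := qPoch_ne_zero (cond_shift hbW) n
    have h2 : qPoch ((q/w)*q) q n ≠ 0 := qPoch_ne_zero (cond_shift htW) n
    field_simp
  have hR : ∀ n : ℕ, (w ^ n)⁻¹ * q ^ n / qPoch w q (n + 1)
      = (1/(1-w)) * gS w (q/w) q n := by
    intro n
    unfold gS
    rw [qPoch_succ w, div_pow]
    have h1 : qPoch (w*q) q n ≠ 0 := qPoch_ne_zero (cond_shift hbW) n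
    field_simp
  calc ∑' n : ℕ, q ^ (n * (n + 1)) / (qPoch w q (n + 1) * qPoch (w⁻¹ * q) q (n + 1))
      = ∑' n : ℕ, (1/((1-w)*(1-q/w))) * fT w (q/w) q n := tsum_congr hL
    _ = (1/((1-w)*(1-q/w))) * ∑' n, fT w (q/w) q n := tsum_mul_left
    _ = (1/((1-w)*(1-q/w))) * ((1 - q/w) * ∑' n, gS w (q/w) q n) := by
        rw [key hq ht1 hbW htW]
    _ = (1/(1-w)) * ∑' n, gS w (q/w) q n := by
        generalize (∑' n : ℕ, gS w (q/w) q n) = S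
        rw [one_div, one_div, mul_inv]
        rw [show (1-w)⁻¹*(1-q/w)⁻¹ * ((1-q/w)*S)
            = (1-w)⁻¹ * (((1-q/w)⁻¹*(1-q/w)) * S) from by ring,
          inv_mul_cancel₀ htw0, one_mul]
    _ = ∑' n : ℕ, (1/(1-w)) * gS w (q/w) q n := tsum_mul_left.symm
    _ = ∑' n : ℕ, (w ^ n)⁻¹ * q ^ n / qPoch w q (n + 1) :=
        tsum_congr (fun n => (hR n).symm)
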